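/- Let R = k⟨X⟩ * k[Y] with X, Y sets and k a field, and fix a strict total order on the monoid M = ⟨X⟩ * [Y]. Let a, b ∈ R be homogeneous, and let x ∈ supp(a), y ∈ supp(b) satisfy: (1) s(x) is maximal among {s(w) : w ∈ supp(a) ∩ [x]}, or x is non-pure and s(x) is maximal among {s(w) : w ∈ supp(a) ∩ [x], p(w) = p(x)}; (2) p(y) is maximal among {p(w) : w ∈ supp(b) ∩ [y]}, or y is non-pure and p(y) is maximal among {p(w) : w ∈ supp(b) ∩ [y], s(w) = s(y)}. Then xy ∈ supp(ab). -/

import Mathlib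

/-- Words over `X ⊔ Y`. -/
abbrev FM (X Y : Type) := FreeMonoid (X ⊕ Y)

/-- Swapping two adjacent `Y`-letters. -/
def yRel (X Y : Type) : FM X Y → FM X Y → Prop := fun a b =>
  ∃ (u v : FM X Y) (y₁ y₂ : Y),
    a = u * FreeMonoid.of (Sum.inr y₁) * FreeMonoid.of (Sum.inr y₂) * v ∧
    b = u * FreeMonoid.of (Sum.inr y₂) * FreeMonoid.of (Sum.inr y₁) * v

/-- The congruence generated by swaps of adjacent `Y`-letters. -/
def coCon (X Y : Type) : Con (FM X Y) := conGen (yRel X Y)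

/-- The coproduct monoid `⟨X⟩ * [Y]`. -/
abbrev CoprodM (X Y : Type) := (coCon X Y).Quotient

/-- Length descends to the quotient. -/
def lenHom (X Y : Type) : CoprodM X Y →* Multiplicative ℕ :=
  Con.lift _ (FreeMonoid.lift fun _ => Multiplicative.ofAdd 1) (by
    refine Con.conGen_le.mpr ?_
    rintro a b ⟨u, v, y₁, y₂, rfl, rfl⟩
    simp [Con.ker_rel, map_mul])

/-- Length of an element of the coproduct monoid. -/
def len {X Y : Type} (w : CoprodM X Y) : ℕ := Multiplicative.toAdd (lenHom X Y w)

/-- A monoid recording the commuting prefix and suffix. -/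
inductive PS (Y : Type) where
  | pure : Multiset Y → PS Y
  | mixed : Multiset Y → Multiset Y → PS Y

def PS.mul {Y : Type} : PS Y → PS Y → PS Y
  | .pure c, .pure d => .pure (c + d)
  | .pure c, .mixed p s => .mixed (c + p) s
  | .mixed p s, .pure d => .mixed p (s + d)
  | .mixed p _, .mixed _ s' => .mixed p s'

instance {Y : Type} : Monoid (PS Y) where
  mul := PS.mul
  one := .pure 0
  mul_assoc a b c := by
    rcases a <;> rcases b <;> rcases c <;>
      simp [(· * ·), PS.mul, add_assoc]
  one_mul a := by rcases a <;> simp [(· * ·), PS.mul]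
  mul_one a := by rcases a <;> simp [(· * ·), PS.mul]

/-- The prefix/suffix data descends to the quotient. -/
def psHom (X Y : Type) : CoprodM X Y →* PS Y :=
  Con.lift _ (FreeMonoid.lift fun a =>
      match a with
      | Sum.inl _ => PS.mixed 0 0
      | Sum.inr y => PS.pure {y}) (by
    refine Con.conGen_le.mpr ?_
    rintro a b ⟨u, v, y₁, y₂, rfl, rfl⟩
    have key : (PS.pure {y₁} : PS Y) * PS.pure {y₂} = PS.pure {y₂} * PS.pure {y₁} := by
      show PS.mul _ _ = PS.mul _ _
      simp [PS.mul, add_comm]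
    simp only [Con.ker_rel, map_mul, FreeMonoid.lift_eval_of]
    rw [mul_assoc _ (PS.pure {y₁}), key, mul_assoc, ← mul_assoc, ← mul_assoc])

/-- The commuting prefix of an element, as a multiset of `Y`-variables. -/
def pre {X Y : Type} (w : CoprodM X Y) : Multiset Y :=
  match psHom X Y w with
  | .pure c => c
  | .mixed p _ => p

/-- The commuting suffix of an element, as a multiset of `Y`-variables. -/
def suf {X Y : Type} (w : CoprodM X Y) : Multiset Y :=
  match psHom X Y w with
  | .pure c => c
  | .mixed _ s => s

/-- The canonical embedding of the free abelian monoid `[Y]` (words in `Y`). -/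
def yEmb (X Y : Type) : FreeMonoid Y →* CoprodM X Y :=
  (Con.mk' (coCon X Y)).comp (FreeMonoid.map Sum.inr)

/-- An element is pure if it involves only `Y`-variables. -/
def IsPure {X Y : Type} (w : CoprodM X Y) : Prop := w ∈ MonoidHom.mrange (yEmb X Y)

/-- The pure element of the coproduct monoid corresponding to a multiset of
`Y`-variables. -/
noncomputable def pureElt {X Y : Type} (c : Multiset Y) : CoprodM X Y :=
  yEmb X Y (FreeMonoid.ofList c.toList)

/-- The equivalence relation `∼`: equal lengths and either both pure, or equal
prefix lengths, equal middle parts and equal suffix lengths. -/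
noncomputable def Sim {X Y : Type} (u v : CoprodM X Y) : Prop :=
  len u = len v ∧
  ((IsPure u ∧ IsPure v) ∨
    (¬ IsPure u ∧ ¬ IsPure v ∧
      Multiset.card (pre u) = Multiset.card (pre v) ∧
      Multiset.card (suf u) = Multiset.card (suf v) ∧
      ∃ m : CoprodM X Y,
        u = pureElt (pre u) * m * pureElt (suf u) ∧
        v = pureElt (pre v) * m * pureElt (suf v)))

/-!
Write an element of `⟨X⟩ * [Y]` in normal form `g₀ x₁ g₁ ⋯ xₙ gₙ` with `xᵢ ∈ X` and commuting
`Y`-blocks `gᵢ`. If `u v = x y` with `|u| = |x|`, comparing normal forms shows that `u` and `x`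
agree up to their last block and `v`, `y` agree after their first block; so `u ∼ x`, `v ∼ y`
(with `p(u) = p(x)`, resp. `s(v) = s(y)`, in the non-pure case) and `s(u) p(v) = s(x) p(y)`.
The maximality hypotheses give `s(u) ≤ s(x)` and `p(v) ≤ p(y)`, and strict compatibility of the
order with multiplication forces equality, hence `u = x` and `v = y`. Thus `x y` arises from the
supports in only one way and its coefficient in `a b` is `a(x) b(y) ≠ 0`.
-/

/-- `⟨[(g₀, x₁), …, (gₙ₋₁, xₙ)], gₙ⟩` stands for the word `g₀ x₁ g₁ ⋯ xₙ gₙ`, where the `xᵢ`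
are `X`-letters and the `gᵢ` are commuting blocks of `Y`-letters. -/
structure CoprodNF (X Y : Type) where
  blocks : List (Multiset Y × X)
  tail : Multiset Y

namespace CoprodNF

variable {X Y : Type}

instance : Mul (CoprodNF X Y) where
  mul
    | ⟨l, g⟩, ⟨[], h⟩ => ⟨l, g + h⟩
    | ⟨l, g⟩, ⟨(g', a) :: k, h⟩ => ⟨l ++ (g + g', a) :: k, h⟩

@[simp] theorem mk_mul_mk_nil (l : List (Multiset Y × X)) (g h : Multiset Y) :
    (⟨l, g⟩ * ⟨[], h⟩ : CoprodNF X Y) = ⟨l, g + h⟩ := rfl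

@[simp] theorem mk_mul_mk_cons (l k : List (Multiset Y × X)) (g g' h : Multiset Y) (a : X) :
    (⟨l, g⟩ * ⟨(g', a) :: k, h⟩ : CoprodNF X Y) = ⟨l ++ (g + g', a) :: k, h⟩ := rfl

instance : One (CoprodNF X Y) := ⟨⟨[], 0⟩⟩

theorem one_def : (1 : CoprodNF X Y) = ⟨[], 0⟩ := rfl

instance : Monoid (CoprodNF X Y) where
  mul_assoc := by
    rintro ⟨l, g⟩ ⟨_ | ⟨⟨h', a⟩, k⟩, h⟩ ⟨_ | ⟨⟨e', b⟩, j⟩, e⟩ <;> simp [add_assoc]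
  one_mul := by rintro ⟨_ | ⟨⟨g, a⟩, k⟩, h⟩ <;> simp [one_def]
  mul_one := by rintro ⟨l, g⟩; simp [one_def]

def headGap : CoprodNF X Y → Multiset Y
  | ⟨[], g⟩ => g
  | ⟨(g, _) :: _, _⟩ => g

def size (t : CoprodNF X Y) : ℕ :=
  (t.blocks.map fun b => Multiset.card b.1 + 1).sum + Multiset.card t.tail

theorem size_mul (s t : CoprodNF X Y) : (s * t).size = s.size + t.size := by
  obtain ⟨l, g⟩ := s
  obtain ⟨_ | ⟨⟨g', a⟩, k⟩, h⟩ := t <;> simp [size] <;> ring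

def sizeHom : CoprodNF X Y →* Multiplicative ℕ where
  toFun t := Multiplicative.ofAdd t.size
  map_one' := rfl
  map_mul' s t := by rw [size_mul, ofAdd_add]

def toPS : CoprodNF X Y →* PS Y where
  toFun
    | ⟨[], g⟩ => .pure g
    | ⟨(g, _) :: _, h⟩ => .mixed g h
  map_one' := rfl
  map_mul' := by rintro ⟨_ | ⟨⟨g, b⟩, l⟩, e⟩ ⟨_ | ⟨⟨g', a⟩, k⟩, h⟩ <;> rfl

theorem size_lt_of_blocks_eq_append {u x : CoprodNF X Y} {b : Multiset Y × X}
    {t : List (Multiset Y × X)} (hx : x.blocks = u.blocks ++ b :: t) (hb : u.tail ≤ b.1) :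
    u.size < x.size := by
  have := Multiset.card_le_card hb
  simp only [size, hx, List.map_append, List.map_cons, List.sum_append, List.sum_cons]
  omega

theorem exists_blocks_mul (u v : CoprodNF X Y) :
    ∃ r, (u * v).blocks = u.blocks ++ r ∧ ∀ b ∈ r.head?, u.tail ≤ b.1 := by
  obtain ⟨l, g⟩ := u
  obtain ⟨_ | ⟨⟨g', a⟩, k⟩, h⟩ := v
  · exact ⟨[], by simp⟩
  · exact ⟨(g + g', a) :: k, by simp⟩

theorem blocks_eq_of_mul_eq_mul {u v x y : CoprodNF X Y} (h : u * v = x * y)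
    (hsize : u.size = x.size) : u.blocks = x.blocks := by
  obtain ⟨r, hr, hru⟩ := exists_blocks_mul u v
  obtain ⟨r', hr', hrx⟩ := exists_blocks_mul x y
  rw [h, hr'] at hr
  -- if one block list properly extends the other, its next block absorbs the other's last gap
  rcases List.append_eq_append_iff.1 hr.symm with ⟨_ | ⟨b, t⟩, hx, hr⟩ | ⟨_ | ⟨b, t⟩, hu, hr⟩
  · simpa using hx.symm
  · exact absurd hsize (size_lt_of_blocks_eq_append hx (hru b (by simp [hr]))).ne
  · simpa using hu
  · exact absurd hsize (size_lt_of_blocks_eq_append hu (hrx b (by simp [hr]))).ne'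

theorem eq_of_mul_eq_mul {u v x y : CoprodNF X Y} (h : u * v = x * y)
    (hsize : u.size = x.size) :
    u.blocks = x.blocks ∧ u.tail + v.headGap = x.tail + y.headGap ∧
      (v.blocks = [] ∧ y.blocks = [] ∨
        ∃ g g' a l, v.blocks = (g, a) :: l ∧ y.blocks = (g', a) :: l ∧
          Multiset.card g = Multiset.card g' ∧ v.tail = y.tail) := by
  have hb := blocks_eq_of_mul_eq_mul h hsize
  have hsize' : v.size = y.size := by
    have := congrArg size h
    rw [size_mul, size_mul] at this
    omega
  obtain ⟨l, gu⟩ := u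
  obtain ⟨l', gx⟩ := x
  obtain rfl : l = l' := hb
  obtain ⟨_ | ⟨⟨g, a⟩, k⟩, e⟩ := v <;> obtain ⟨_ | ⟨⟨g', a'⟩, k'⟩, e'⟩ := y <;>
    simp only [mk_mul_mk_nil, mk_mul_mk_cons, mk.injEq, List.self_eq_append_right,
      List.append_right_eq_self, List.append_cancel_left_eq, List.cons.injEq, Prod.mk.injEq,
      reduceCtorEq, false_and, true_and] at h
  · exact ⟨rfl, h, Or.inl ⟨rfl, rfl⟩⟩
  · obtain ⟨⟨⟨hg, rfl⟩, rfl⟩, rfl⟩ := h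
    refine ⟨rfl, hg, Or.inr ⟨g, g', a, k, rfl, rfl, ?_, rfl⟩⟩
    simp only [size, List.map_cons, List.sum_cons] at hsize'
    omega

end CoprodNF

namespace CoprodM

variable {X Y : Type}

def mkX (a : X) : CoprodM X Y := (coCon X Y).mk' (FreeMonoid.of (Sum.inl a))

theorem commute_yEmb_of (y₁ y₂ : Y) :
    Commute (yEmb X Y (FreeMonoid.of y₁)) (yEmb X Y (FreeMonoid.of y₂)) :=
  (Con.eq _).2 (ConGen.Rel.of _ _ ⟨1, 1, y₁, y₂, by simp, by simp⟩)

theorem pureElt_coe (l : List Y) :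
    pureElt (X := X) (l : Multiset Y) = yEmb X Y (FreeMonoid.ofList l) := by
  have hperm : (l : Multiset Y).toList.Perm l := Multiset.coe_eq_coe.1 (by simp)
  rw [pureElt, ← FreeMonoid.lift_restrict (yEmb X Y), FreeMonoid.lift_ofList,
    FreeMonoid.lift_ofList]
  refine (hperm.map _).prod_eq' ?_
  rw [List.pairwise_map]
  exact List.pairwise_of_forall commute_yEmb_of

theorem pureElt_add (c d : Multiset Y) :
    pureElt (X := X) (c + d) = pureElt c * pureElt d := by
  rw [← Multiset.coe_toList c, ← Multiset.coe_toList d, Multiset.coe_add, pureElt_coe,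
    pureElt_coe, pureElt_coe, FreeMonoid.ofList_append, map_mul]

@[simp] theorem pureElt_zero : pureElt (X := X) (0 : Multiset Y) = 1 :=
  (pureElt_coe []).trans (map_one _)

theorem pureElt_singleton (y : Y) : pureElt (X := X) {y} = yEmb X Y (FreeMonoid.of y) :=
  pureElt_coe [y]

def ofLetter : X ⊕ Y → CoprodNF X Y
  | .inl a => ⟨[(0, a)], 0⟩
  | .inr y => ⟨[], {y}⟩

def nf : CoprodM X Y →* CoprodNF X Y :=
  Con.lift _ (FreeMonoid.lift ofLetter) (by
    refine Con.conGen_le.mpr ?_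
    rintro _ _ ⟨u, v, y₁, y₂, rfl, rfl⟩
    have hswap : ofLetter (.inr y₁) * ofLetter (.inr y₂) =
        (ofLetter (.inr y₂) * ofLetter (.inr y₁) : CoprodNF X Y) := by
      simp [ofLetter, add_comm]
    simp only [Con.ker_rel, map_mul, FreeMonoid.lift_eval_of]
    rw [mul_assoc (FreeMonoid.lift ofLetter u), hswap, ← mul_assoc])

theorem nf_of (c : X ⊕ Y) : nf ((FreeMonoid.of c : FM X Y) : CoprodM X Y) = ofLetter c := rfl

noncomputable def toCoprod : CoprodNF X Y →* CoprodM X Y where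
  toFun t := (t.blocks.map fun b => pureElt b.1 * mkX b.2).prod * pureElt t.tail
  map_one' := by simp [CoprodNF.one_def]
  map_mul' := by
    rintro ⟨l, g⟩ ⟨_ | ⟨⟨g', a⟩, k⟩, h⟩ <;> simp [pureElt_add, mul_assoc]

theorem toCoprod_mk (l : List (Multiset Y × X)) (g : Multiset Y) :
    toCoprod ⟨l, g⟩ = (l.map fun b => pureElt b.1 * mkX b.2).prod * pureElt g := rfl

theorem toCoprod_nf (w : CoprodM X Y) : toCoprod (nf w) = w := by
  suffices toCoprod.comp nf = MonoidHom.id (CoprodM X Y) from DFunLike.congr_fun this w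
  refine Con.hom_ext (FreeMonoid.hom_eq ?_)
  rintro (a | y)
  · simp [nf_of, ofLetter, toCoprod_mk]; rfl
  · simp [nf_of, ofLetter, toCoprod_mk, pureElt_singleton]; rfl

theorem len_eq_size (w : CoprodM X Y) : len w = (nf w).size := by
  have : lenHom X Y = CoprodNF.sizeHom.comp nf :=
    Con.hom_ext (FreeMonoid.hom_eq (by rintro (a | y) <;> rfl))
  rw [len, this]
  rfl

theorem len_mul (u v : CoprodM X Y) : len (u * v) = len u + len v := by
  simp only [len, map_mul, toAdd_mul]

theorem psHom_eq_comp_nf : psHom X Y = CoprodNF.toPS.comp nf :=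
  Con.hom_ext (FreeMonoid.hom_eq (by rintro (a | y) <;> rfl))

theorem pre_eq_headGap (w : CoprodM X Y) : pre w = (nf w).headGap := by
  rw [pre, psHom_eq_comp_nf, MonoidHom.comp_apply]
  rcases nf w with ⟨_ | _, _⟩ <;> rfl

theorem suf_eq_tail (w : CoprodM X Y) : suf w = (nf w).tail := by
  rw [suf, psHom_eq_comp_nf, MonoidHom.comp_apply]
  rcases nf w with ⟨_ | _, _⟩ <;> rfl

theorem nf_pureElt (c : Multiset Y) : nf (pureElt (X := X) c) = ⟨[], c⟩ := by
  induction c using Multiset.induction_on with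
  | empty => simp [CoprodNF.one_def]
  | cons y c ih =>
    rw [← Multiset.singleton_add, pureElt_add, map_mul, ih, pureElt_singleton]
    rfl

theorem isPure_iff_blocks_eq_nil (w : CoprodM X Y) : IsPure w ↔ (nf w).blocks = [] := by
  constructor
  · rintro ⟨l, rfl⟩
    rw [← FreeMonoid.ofList_toList l, ← pureElt_coe, nf_pureElt]
  · intro h
    rw [← toCoprod_nf w]
    generalize nf w = t at h
    obtain ⟨l, g⟩ := t
    obtain rfl : l = [] := h
    exact ⟨FreeMonoid.ofList g.toList, by simp [toCoprod_mk, pureElt]⟩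

theorem toCoprod_blocks_mul_pureElt_suf (w : CoprodM X Y) :
    toCoprod ⟨(nf w).blocks, 0⟩ * pureElt (suf w) = w := by
  conv_rhs => rw [← toCoprod_nf w]
  rw [suf_eq_tail, toCoprod_mk, toCoprod_mk, pureElt_zero, mul_one]

theorem pre_eq_and_eq_of_blocks_eq_cons {w : CoprodM X Y} {g : Multiset Y} {a : X}
    {l : List (Multiset Y × X)} (hw : (nf w).blocks = (g, a) :: l) :
    pre w = g ∧ w = pureElt g * toCoprod ⟨(0, a) :: l, 0⟩ * pureElt (suf w) := by
  rw [pre_eq_headGap, suf_eq_tail]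
  rcases hnf : nf w with ⟨b, e⟩
  obtain rfl : b = (g, a) :: l := by rw [← hw, hnf]
  refine ⟨rfl, ?_⟩
  conv_lhs => rw [← toCoprod_nf w, hnf]
  simp [toCoprod_mk, mul_assoc]

theorem sim_of_blocks_eq_cons {u x : CoprodM X Y} {g g' : Multiset Y} {a : X}
    {l : List (Multiset Y × X)} (hlen : len u = len x) (hu : (nf u).blocks = (g, a) :: l)
    (hx : (nf x).blocks = (g', a) :: l) (hg : Multiset.card g = Multiset.card g') :
    Sim u x := by
  obtain ⟨hpu, hu'⟩ := pre_eq_and_eq_of_blocks_eq_cons hu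
  obtain ⟨hpx, hx'⟩ := pre_eq_and_eq_of_blocks_eq_cons hx
  have hsuf : Multiset.card (suf u) = Multiset.card (suf x) := by
    simp only [len_eq_size, CoprodNF.size, hu, hx, List.map_cons, List.sum_cons] at hlen
    rw [suf_eq_tail, suf_eq_tail]
    omega
  refine ⟨hlen, Or.inr ⟨?_, ?_, by rw [hpu, hpx, hg], hsuf, _, hpu ▸ hu', hpx ▸ hx'⟩⟩ <;>
    simp [isPure_iff_blocks_eq_nil, hu, hx]

variable {u v x y : CoprodM X Y}

theorem nf_eq_of_mul_eq_mul (h : u * v = x * y) (hlen : len u = len x) :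
    (nf u).blocks = (nf x).blocks ∧ (nf u).tail + (nf v).headGap = (nf x).tail + (nf y).headGap ∧
      ((nf v).blocks = [] ∧ (nf y).blocks = [] ∨
        ∃ g g' a l, (nf v).blocks = (g, a) :: l ∧ (nf y).blocks = (g', a) :: l ∧
          Multiset.card g = Multiset.card g' ∧ (nf v).tail = (nf y).tail) :=
  CoprodNF.eq_of_mul_eq_mul (by rw [← map_mul, ← map_mul, h])
    (by rwa [← len_eq_size, ← len_eq_size])

theorem sim_and_pre_eq_of_mul_eq_mul (h : u * v = x * y) (hlen : len u = len x) :
    Sim u x ∧ (¬ IsPure x → pre u = pre x) := by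
  have hb := (nf_eq_of_mul_eq_mul h hlen).1
  rcases hu : (nf u).blocks with _ | ⟨⟨g, a⟩, l⟩
  · have hx : IsPure x := by rw [isPure_iff_blocks_eq_nil, ← hb, hu]
    exact ⟨⟨hlen, Or.inl ⟨(isPure_iff_blocks_eq_nil u).2 hu, hx⟩⟩, absurd hx⟩
  · have hx := hb ▸ hu
    refine ⟨sim_of_blocks_eq_cons hlen hu hx rfl, fun _ => ?_⟩
    rw [(pre_eq_and_eq_of_blocks_eq_cons hu).1, (pre_eq_and_eq_of_blocks_eq_cons hx).1]

theorem sim_and_suf_eq_of_mul_eq_mul (h : u * v = x * y) (hlen : len u = len x) :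
    Sim v y ∧ (¬ IsPure y → suf v = suf y) := by
  have hlen' : len v = len y := by
    have := congrArg len h
    rw [len_mul, len_mul] at this
    omega
  rcases (nf_eq_of_mul_eq_mul h hlen).2.2 with ⟨hv, hy⟩ | ⟨g, g', a, l, hv, hy, hg, htail⟩
  · have hy := (isPure_iff_blocks_eq_nil y).2 hy
    exact ⟨⟨hlen', Or.inl ⟨(isPure_iff_blocks_eq_nil v).2 hv, hy⟩⟩, absurd hy⟩
  · exact ⟨sim_of_blocks_eq_cons hlen' hv hy hg, fun _ => by rw [suf_eq_tail, suf_eq_tail, htail]⟩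

theorem suf_add_pre_eq_of_mul_eq_mul (h : u * v = x * y) (hlen : len u = len x) :
    suf u + pre v = suf x + pre y := by
  simpa only [suf_eq_tail, pre_eq_headGap] using (nf_eq_of_mul_eq_mul h hlen).2.1

theorem exists_eq_mul_pureElt_suf_of_mul_eq_mul (h : u * v = x * y) (hlen : len u = len x) :
    ∃ W, u = W * pureElt (suf u) ∧ x = W * pureElt (suf x) := by
  refine ⟨toCoprod ⟨(nf u).blocks, 0⟩, (toCoprod_blocks_mul_pureElt_suf u).symm, ?_⟩
  rw [(nf_eq_of_mul_eq_mul h hlen).1, toCoprod_blocks_mul_pureElt_suf]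

end CoprodM

open CoprodM in
theorem coprod_mul_support_mem_general {X Y k : Type} [Field k]
    [LinearOrder (CoprodM X Y)]
    (hcompat : ∀ a b c : CoprodM X Y, a < b → a * c < b * c ∧ c * a < c * b)
    (a b : MonoidAlgebra k (CoprodM X Y)) (m : ℕ)
    (ha : ∀ w ∈ a.coeff.support, len w = m)
    (x y : CoprodM X Y) (hx : x ∈ a.coeff.support) (hy : y ∈ b.coeff.support)
    (h1 : (∀ w ∈ a.coeff.support, Sim w x →
            pureElt (X := X) (suf w) ≤ pureElt (X := X) (suf x)) ∨
          (¬ IsPure x ∧ ∀ w ∈ a.coeff.support, Sim w x → pre w = pre x →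
            pureElt (X := X) (suf w) ≤ pureElt (X := X) (suf x)))
    (h2 : (∀ w ∈ b.coeff.support, Sim w y →
            pureElt (X := X) (pre w) ≤ pureElt (X := X) (pre y)) ∨
          (¬ IsPure y ∧ ∀ w ∈ b.coeff.support, Sim w y → suf w = suf y →
            pureElt (X := X) (pre w) ≤ pureElt (X := X) (pre y))) :
    x * y ∈ (a * b).coeff.support := by
  have : MulLeftStrictMono (CoprodM X Y) := ⟨fun c _ _ hlt => (hcompat _ _ c hlt).2⟩
  have : MulRightStrictMono (CoprodM X Y) := ⟨fun c _ _ hlt => (hcompat _ _ c hlt).1⟩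
  have huniq : UniqueMul a.coeff.support b.coeff.support x y := by
    intro u v hu hv huv
    have hlen : len u = len x := (ha u hu).trans (ha x hx).symm
    obtain ⟨hux, hpre⟩ := sim_and_pre_eq_of_mul_eq_mul huv hlen
    obtain ⟨hvy, hsuf⟩ := sim_and_suf_eq_of_mul_eq_mul huv hlen
    have hsu : pureElt (X := X) (suf u) ≤ pureElt (suf x) := by
      rcases h1 with H | ⟨hnp, H⟩
      exacts [H u hu hux, H u hu hux (hpre hnp)]
    have hpv : pureElt (X := X) (pre v) ≤ pureElt (pre y) := by
      rcases h2 with H | ⟨hnp, H⟩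
      exacts [H v hv hvy, H v hv hvy (hsuf hnp)]
    have hsu_eq : pureElt (X := X) (suf u) = pureElt (suf x) :=
      ((mul_eq_mul_iff_eq_and_eq hsu hpv).1 (by
        rw [← pureElt_add, ← pureElt_add, suf_add_pre_eq_of_mul_eq_mul huv hlen])).1
    obtain ⟨W, hu', hx'⟩ := exists_eq_mul_pureElt_suf_of_mul_eq_mul huv hlen
    obtain rfl : u = x := by rw [hu', hx', hsu_eq]
    exact ⟨rfl, (mul_right_inj_of_comparable (le_total y v)).1 huv⟩
  rw [Finsupp.mem_support_iff, MonoidAlgebra.coeff_mul_mul_of_uniqueMul huniq]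
  exact mul_ne_zero (Finsupp.mem_support_iff.1 hx) (Finsupp.mem_support_iff.1 hy)

/-- Lemma 3.7: if `s(x)` is maximal among the suffixes in `supp a ∩ [x]` (or
among those with prefix `p(x)`, when `x` is non-pure), and symmetrically `p(y)`
is maximal, then `xy ∈ supp (ab)`. -/
theorem coprod_mul_support_mem {X Y k : Type} [Field k]
    [LinearOrder (CoprodM X Y)]
    (hcompat : ∀ a b c : CoprodM X Y, a < b → a * c < b * c ∧ c * a < c * b)
    (a b : MonoidAlgebra k (CoprodM X Y)) (m n : ℕ)
    (ha : ∀ w ∈ a.coeff.support, len w = m) (hb : ∀ w ∈ b.coeff.support, len w = n)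
    (x y : CoprodM X Y) (hx : x ∈ a.coeff.support) (hy : y ∈ b.coeff.support)
    (h1 : (∀ w ∈ a.coeff.support, Sim w x →
            pureElt (X := X) (suf w) ≤ pureElt (X := X) (suf x)) ∨
          (¬ IsPure x ∧ ∀ w ∈ a.coeff.support, Sim w x → pre w = pre x →
            pureElt (X := X) (suf w) ≤ pureElt (X := X) (suf x)))
    (h2 : (∀ w ∈ b.coeff.support, Sim w y →
            pureElt (X := X) (pre w) ≤ pureElt (X := X) (pre y)) ∨
          (¬ IsPure y ∧ ∀ w ∈ b.coeff.support, Sim w y → suf w = suf y →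
            pureElt (X := X) (pre w) ≤ pureElt (X := X) (pre y))) :
    x * y ∈ (a * b).coeff.support :=
  coprod_mul_support_mem_general hcompat a b m ha x y hx hy h1 h2
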